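/- Let B : Fin m → Fin m → ℝ be antisymmetric. Then B is simple (there exist u, v : Fin m → ℝ with B i j = u i * v j − v i * u j) if and only if the full antisymmetrization over all four indices of (i,j,k,l) ↦ B i j * B k l vanishes for all i,j,k,l (the Plucker relation B_{[ij}B_{kl]} = 0). -/

import Mathlib

open Finset

/-- Full antisymmetrization of a 4-index expression over all four index slots. -/
noncomputable def alt4 {m : ℕ} (T : Fin m → Fin m → Fin m → Fin m → ℝ)
    (i j k l : Fin m) : ℝ :=
  (1 / 24 : ℝ) * ∑ σ : Equiv.Perm (Fin 4),
    ((Equiv.Perm.sign σ : ℤ) : ℝ) *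
      T (![i, j, k, l] (σ 0)) (![i, j, k, l] (σ 1)) (![i, j, k, l] (σ 2)) (![i, j, k, l] (σ 3))

/-!
For antisymmetric `B`, the 24 terms of `B_{[ij}B_{kl]}` fall into three classes of eight, so
the Plücker relation is the three-term identity `B i j B k l - B i k B j l + B i l B j k = 0`.
A wedge `u ∧ v` satisfies it identically. Conversely, if `B a b ≠ 0`, the instance `(a, b, i, j)`
of the identity solves for `B i j` and exhibits `B = (B a · / B a b) ∧ B b ·`.
-/

section PluckerForm

variable {ι R : Type*}

def pluckerForm [CommRing R] (B : ι → ι → R) (i j k l : ι) : R :=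
  B i j * B k l - B i k * B j l + B i l * B j k

theorem pluckerForm_wedge [CommRing R] (u v : ι → R) (i j k l : ι) :
    pluckerForm (fun i j => u i * v j - v i * u j) i j k l = 0 := by
  unfold pluckerForm
  ring

theorem exists_eq_wedge_of_pluckerForm_eq_zero [Field R] (B : ι → ι → R)
    (hP : ∀ i j k l, pluckerForm B i j k l = 0) :
    ∃ u v : ι → R, ∀ i j, B i j = u i * v j - v i * u j := by
  by_cases hzero : ∀ i j, B i j = 0
  · exact ⟨0, 0, fun i j => by simp [hzero]⟩
  obtain ⟨a, b, hab⟩ : ∃ a b, B a b ≠ 0 := by simpa using hzero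
  refine ⟨fun i => B a i / B a b, fun i => B b i, fun i j => ?_⟩
  have h := hP a b i j
  unfold pluckerForm at h
  field_simp
  linear_combination h

end PluckerForm

theorem Equiv.Perm.sum_fin_succ {M : Type*} [AddCommMonoid M] {n : ℕ}
    (f : Equiv.Perm (Fin (n + 1)) → M) :
    ∑ σ, f σ = ∑ a : Fin (n + 1), ∑ σ : Equiv.Perm (Fin n), f (decomposeFin.symm (a, σ)) := by
  rw [← decomposeFin.symm.sum_comp, Fintype.sum_prod_type]

theorem alt4_mul_self_eq {m : ℕ} (B : Fin m → Fin m → ℝ) (hB : ∀ i j, B i j = - B j i)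
    (i j k l : Fin m) :
    alt4 (fun a b c d => B a b * B c d) i j k l = pluckerForm B i j k l / 3 := by
  have e41 : (1 : Fin 4) = Fin.succ 0 := rfl
  have e42 : (2 : Fin 4) = Fin.succ 1 := rfl
  have e43 : (3 : Fin 4) = Fin.succ 2 := rfl
  have e31 : (1 : Fin 3) = Fin.succ 0 := rfl
  have e32 : (2 : Fin 3) = Fin.succ 1 := rfl
  have e21 : (1 : Fin 2) = Fin.succ 0 := rfl
  unfold alt4 pluckerForm
  simp only [Equiv.Perm.sum_fin_succ, Fin.sum_univ_succ, Finset.univ_unique,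
    Finset.sum_singleton, e41, e42, e43, e31, e32, e21, Equiv.Perm.decomposeFin.symm_sign,
    Equiv.Perm.decomposeFin_symm_apply_zero, Equiv.Perm.decomposeFin_symm_apply_succ]
  norm_num [Fin.succAbove, Matrix.cons_val_zero, Matrix.cons_val_one, Matrix.cons_val_two,
    Matrix.cons_val_succ, Fin.lt_def, Equiv.Perm.sign_swap', Equiv.swap_apply_def, Fin.ext_iff]
  rw [hB j i, hB k i, hB l i, hB k j, hB l j, hB l k]
  ring

/-- An antisymmetric bivector `B` is simple iff it satisfies the Plucker relation
`B_{[ij}B_{kl]} = 0`. -/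
theorem simple_iff_plucker (m : ℕ) (B : Fin m → Fin m → ℝ)
    (hB : ∀ i j, B i j = - B j i) :
    (∃ u v : Fin m → ℝ, ∀ i j, B i j = u i * v j - v i * u j) ↔
    (∀ i j k l, alt4 (fun i j k l => B i j * B k l) i j k l = 0) := by
  simp only [alt4_mul_self_eq B hB, div_eq_zero_iff, three_ne_zero, or_false]
  refine ⟨?_, exists_eq_wedge_of_pluckerForm_eq_zero B⟩
  rintro ⟨u, v, huv⟩ i j k l
  simpa only [← huv] using pluckerForm_wedge u v i j k l
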